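/- arXiv:math/0204175 — 2 statements merged into one kernel-verified Lean document; each statement's English description precedes it below -/
import Mathlib

section
/- Let M ≥ N ≥ 1, let φ_M(S) = [π^{N(N−1)/2} ∏_{j=1}^N (M−j)!]^{-1} (det S)^{M−N} exp(−Tr S) be the density (on positive semidefinite matrices) of LUE(N,M), and set ψ_M(H) = M^{N²/2} φ_M(M·I_N + √M·H) for Hermitian H (with ψ_M(H)=0 when M·I_N + √M·H is not positive semidefinite). Then for every N×N Hermitian matrix H, ψ_M(H) converges as M → ∞ to ψ(H) = 2^{−N/2} π^{−N²/2} exp(−Tr(H²)/2), the density of GUE(N) with respect to Lebesgue measure on H_N. -/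
/-!
Diagonalise `H = U diag(λ) U*`. Then `M • 1 + √M • H` has eigenvalues `M + √M λᵢ`, and once these
are nonnegative
`ψ_M(H) = π^{-N(N-1)/2} ∏_{j=1}^N [M^{M-j} √M e^{-M} / (M-j)!] ∏ᵢ (1 + λᵢ/√M)^{M-N} e^{-√M λᵢ}`.
By Stirling's formula each bracket tends to `(2π)^{-1/2}`, and the second-order expansion of
`log (1 + x)` gives `(1 + λ/√M)^{M-N} e^{-√M λ} → e^{-λ²/2}`. Since `∑ λᵢ² = Tr(H²)`, the product of
the limits is the GUE density.
-/

open MeasureTheory Filter Topology Matrix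
open scoped NNReal BigOperators Classical ComplexOrder

noncomputable section

/-- The density `φ_M` of `LUE(N,M)` on positive semidefinite Hermitian matrices:
`φ_M(S) = [π^{N(N-1)/2} ∏_{j=1}^N (M-j)!]⁻¹ (det S)^{M-N} exp(-Tr S)` (and `0` off the
positive semidefinite cone). For Hermitian positive semidefinite `S`, `det S` and `Tr S`
are real, so we use their real parts. -/
def luePhi (N M : ℕ) (S : Matrix (Fin N) (Fin N) ℂ) : ℝ :=
  if S.PosSemidef then
    (Real.pi ^ (N * (N - 1) / 2) * ∏ j ∈ Finset.range N, ((M - (j + 1)).factorial : ℝ))⁻¹ *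
      (S.det.re) ^ (M - N) * Real.exp (-S.trace.re)
  else 0

/-- The rescaled density `ψ_M(H) = M^{N²/2} φ_M(M·I_N + √M·H)`. -/
def luePsi (N M : ℕ) (H : Matrix (Fin N) (Fin N) ℂ) : ℝ :=
  (M : ℝ) ^ ((N : ℝ) ^ 2 / 2) *
    luePhi N M ((M : ℂ) • (1 : Matrix (Fin N) (Fin N) ℂ) + (Real.sqrt M : ℂ) • H)

open Real Finset
open scoped Nat

lemma tendsto_sqrt_natCast_atTop : Tendsto (fun M : ℕ => √(M : ℝ)) atTop atTop :=
  tendsto_sqrt_atTop.comp tendsto_natCast_atTop_atTop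

lemma tendsto_add_pow_mul_sqrt_mul_exp_neg_div_factorial (x : ℝ) :
    Tendsto (fun n : ℕ => ((n : ℝ) + x) ^ n * √((n : ℝ) + x) * exp (-((n : ℝ) + x)) / n !)
      atTop (𝓝 (√(2 * π))⁻¹) := by
  have hx : Tendsto (fun n : ℕ => 1 + x / n) atTop (𝓝 1) := by
    simpa using tendsto_const_nhds.add (tendsto_const_div_atTop_nhds_zero_nat x)
  have hlim : Tendsto (fun n : ℕ => (1 + x / n) ^ n * √(1 + x / n) * exp (-x) /
      (√2 * Stirling.stirlingSeq n)) atTop (𝓝 (exp x * √1 * exp (-x) / (√2 * √π))) :=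
    (((tendsto_one_add_div_pow_exp x).mul hx.sqrt).mul_const _).div
      (Stirling.tendsto_stirlingSeq_sqrt_pi.const_mul _) (by positivity)
  rw [sqrt_one, mul_one, ← exp_add, add_neg_cancel, exp_zero, ← sqrt_mul zero_le_two,
    one_div] at hlim
  refine hlim.congr' ?_
  filter_upwards [eventually_ne_atTop 0] with n hn
  have hn' : (n : ℝ) ≠ 0 := Nat.cast_ne_zero.mpr hn
  have hsplit : (n : ℝ) + x = n * (1 + x / n) := by field_simp
  have hexp : exp (-((n : ℝ) + x)) = exp (-x) / exp 1 ^ n := by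
    rw [← exp_nat_mul, mul_one, ← exp_sub]; ring_nf
  rw [Stirling.stirlingSeq, hexp, hsplit, sqrt_mul (Nat.cast_nonneg _), sqrt_mul zero_le_two,
    mul_pow, div_pow]
  field_simp

lemma tendsto_pow_sub_mul_sqrt_mul_exp_neg_div_factorial (k : ℕ) :
    Tendsto (fun M : ℕ => (M : ℝ) ^ (M - k) * √M * exp (-M) / (M - k)!) atTop
      (𝓝 (√(2 * π))⁻¹) := by
  refine ((tendsto_add_pow_mul_sqrt_mul_exp_neg_div_factorial k).comp
    (tendsto_sub_atTop_nat k)).congr' ?_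
  filter_upwards [eventually_ge_atTop k] with M hM
  simp only [Function.comp_apply, Nat.cast_sub hM, sub_add_cancel]

lemma abs_log_one_add_sub_self_add_sq_div_two_le {x : ℝ} (hx : |x| ≤ 1 / 2) :
    |log (1 + x) - x + x ^ 2 / 2| ≤ 2 * |x| ^ 3 := by
  have h := abs_log_sub_add_sum_range_le (show |-x| < 1 by rw [abs_neg]; linarith) 2
  norm_num [sum_range_succ] at h
  rw [show log (1 + x) - x + x ^ 2 / 2 = -x + x ^ 2 / 2 + log (1 + x) by ring]
  refine h.trans ?_
  rw [div_le_iff₀ (by linarith)]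
  nlinarith [pow_nonneg (abs_nonneg x) 3]

lemma tendsto_sq_mul_log_one_add_div_sub_mul (t : ℝ) :
    Tendsto (fun s : ℝ => s ^ 2 * log (1 + t / s) - s * t) atTop (𝓝 (-t ^ 2 / 2)) := by
  have hrem : Tendsto (fun s : ℝ => s ^ 2 * (log (1 + t / s) - t / s + (t / s) ^ 2 / 2))
      atTop (𝓝 0) := by
    refine squeeze_zero_norm' ?_ ((tendsto_const_nhds (x := 2 * |t| ^ 3)).div_atTop tendsto_id)
    filter_upwards [eventually_ge_atTop (2 * |t| + 1)] with s hs
    have hs0 : 0 < s := by linarith [abs_nonneg t]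
    have hts : |t / s| ≤ 1 / 2 := by
      rw [abs_div, abs_of_pos hs0, div_le_iff₀ hs0]; linarith
    calc ‖s ^ 2 * (log (1 + t / s) - t / s + (t / s) ^ 2 / 2)‖
        ≤ s ^ 2 * (2 * |t / s| ^ 3) := by
          rw [norm_mul, Real.norm_eq_abs, abs_of_nonneg (sq_nonneg s)]
          exact mul_le_mul_of_nonneg_left (abs_log_one_add_sub_self_add_sq_div_two_le hts)
            (sq_nonneg s)
      _ = 2 * |t| ^ 3 / s := by
          rw [abs_div, abs_of_pos hs0]; field_simp
  have := hrem.sub_const (t ^ 2 / 2)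
  rw [zero_sub, ← neg_div] at this
  refine this.congr' ?_
  filter_upwards [eventually_gt_atTop 0] with s hs
  field_simp
  ring

lemma tendsto_one_add_div_sqrt_pow_sub_mul_exp (N : ℕ) (t : ℝ) :
    Tendsto (fun M : ℕ => (1 + t / √M) ^ (M - N) * exp (-(√M * t))) atTop
      (𝓝 (exp (-t ^ 2 / 2))) := by
  have hlog : Tendsto (fun s : ℝ => log (1 + t / s)) atTop (𝓝 0) := by
    have h1 : Tendsto (fun s : ℝ => 1 + t / s) atTop (𝓝 1) := by
      simpa using tendsto_const_nhds.add (tendsto_const_nhds.div_atTop (tendsto_id (α := ℝ)))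
    simpa [Function.comp_def] using (continuousAt_log one_ne_zero).tendsto.comp h1
  -- with `s = √M`: `(M - N) log (1 + t/s) - s t = (s² log (1 + t/s) - s t) - N log (1 + t/s)`
  have hexponent :=
    ((tendsto_sq_mul_log_one_add_div_sub_mul t).sub (hlog.const_mul (N : ℝ))).comp
      tendsto_sqrt_natCast_atTop
  rw [mul_zero, sub_zero] at hexponent
  refine ((continuous_exp.tendsto _).comp hexponent).congr' ?_
  filter_upwards [eventually_ge_atTop N, tendsto_sqrt_natCast_atTop.eventually_gt_atTop |t|]
    with M hNM hM
  have hs0 : 0 < √(M : ℝ) := (abs_nonneg t).trans_lt hM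
  have hpos : 0 < 1 + t / √M := by
    have : -1 < t / √M := by rw [lt_div_iff₀ hs0]; linarith [neg_abs_le t]
    linarith
  simp only [Function.comp_apply, sq_sqrt (Nat.cast_nonneg (M : ℕ))]
  rw [← rpow_natCast, rpow_def_of_pos hpos, ← exp_add, Nat.cast_sub hNM]
  congr 1
  ring

lemma two_mul_sum_range_sub_succ_add {N M : ℕ} (hNM : N ≤ M) :
    2 * ∑ j ∈ range N, (M - (j + 1)) + N = N ^ 2 + 2 * (N * (M - N)) := by
  induction N with
  | zero => simp
  | succ N ih =>
    have h := ih (by omega)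
    rw [sum_range_succ, show M - N = M - (N + 1) + 1 by omega] at *
    nlinarith

lemma two_mul_mul_pred_div_two_add_self (N : ℕ) : 2 * (N * (N - 1) / 2) + N = N ^ 2 := by
  rw [Nat.two_mul_div_two_of_even (Nat.even_mul_pred_self N)]
  cases N with
  | zero => rfl
  | succ n => simp only [Nat.add_sub_cancel]; ring

lemma natCast_rpow_sq_div_two_mul_pow_eq_prod {N M : ℕ} (hNM : N ≤ M) :
    (M : ℝ) ^ ((N : ℝ) ^ 2 / 2) * ((M : ℝ) ^ N) ^ (M - N) =
      (∏ j ∈ range N, (M : ℝ) ^ (M - (j + 1))) * √M ^ N := by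
  have hM : (M : ℝ) = √M ^ 2 := (sq_sqrt (Nat.cast_nonneg M)).symm
  have hrpow : (M : ℝ) ^ ((N : ℝ) ^ 2 / 2) = √M ^ (N ^ 2) := by
    rw [sqrt_eq_rpow, ← rpow_natCast (M ^ (1 / 2 : ℝ)) (N ^ 2), ← rpow_mul (Nat.cast_nonneg M)]
    push_cast; ring_nf
  rw [hrpow, hM, sqrt_sq (sqrt_nonneg _), prod_pow_eq_pow_sum, ← pow_mul, ← pow_mul, ← pow_mul,
    ← pow_add, ← pow_add, ← two_mul_sum_range_sub_succ_add hNM]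

lemma inv_pi_pow_mul_inv_sqrt_two_pi_pow (N : ℕ) :
    (π ^ (N * (N - 1) / 2))⁻¹ * (√(2 * π))⁻¹ ^ N =
      2 ^ (-(N : ℝ) / 2) * π ^ (-(N : ℝ) ^ 2 / 2) := by
  have hsq (x : ℝ) (hx : 0 ≤ x) (e : ℝ) : x ^ (-e / 2) = (√x ^ e)⁻¹ := by
    rw [sqrt_eq_rpow, ← rpow_mul hx, ← rpow_neg hx]; ring_nf
  rw [hsq 2 zero_le_two, hsq π pi_pos.le, ← sq_sqrt pi_pos.le, sqrt_mul zero_le_two,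
    sqrt_sq (sqrt_nonneg _), ← pow_mul, rpow_natCast, ← Nat.cast_pow, rpow_natCast,
    ← two_mul_mul_pred_div_two_add_self N, pow_add]
  ring

namespace Matrix.IsHermitian
variable {n 𝕜 : Type*} [RCLike 𝕜] [Fintype n] [DecidableEq n] {A : Matrix n n 𝕜}

lemma det_cfc (hA : A.IsHermitian) (f : ℝ → ℝ) :
    (cfc f A).det = ∏ i, (f (hA.eigenvalues i) : 𝕜) := by
  rw [hA.cfc_eq, IsHermitian.cfc, Unitary.conjStarAlgAut_apply, det_mul_right_comm,
    ← Unitary.coe_star, Unitary.coe_mul_star_self, one_mul, det_diagonal]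
  rfl

lemma trace_cfc (hA : A.IsHermitian) (f : ℝ → ℝ) :
    (cfc f A).trace = ∑ i, (f (hA.eigenvalues i) : 𝕜) := by
  rw [hA.cfc_eq, IsHermitian.cfc, Unitary.conjStarAlgAut_apply, trace_mul_cycle,
    Unitary.coe_star_mul_self, one_mul, trace_diagonal]
  rfl

open scoped MatrixOrder in
lemma posSemidef_cfc (hA : A.IsHermitian) {f : ℝ → ℝ} (hf : ∀ i, 0 ≤ f (hA.eigenvalues i)) :
    (cfc f A).PosSemidef := by
  refine nonneg_iff_posSemidef.mp (cfc_nonneg fun x hx => ?_)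
  obtain ⟨i, rfl⟩ := hA.spectrum_real_eq_range_eigenvalues ▸ hx
  exact hf i

lemma ofReal_smul_one_add_ofReal_smul_eq_cfc (hA : A.IsHermitian) (a b : ℝ) :
    (a : 𝕜) • (1 : Matrix n n 𝕜) + (b : 𝕜) • A = cfc (fun x => a + b * x) A := by
  have hA' : IsSelfAdjoint A := hA
  rw [cfc_const_add a (fun x => b * x) A, cfc_const_mul_id b A, Algebra.algebraMap_eq_smul_one,
    RCLike.real_smul_eq_coe_smul (K := 𝕜), RCLike.real_smul_eq_coe_smul (K := 𝕜)]

lemma re_trace_mul_self (hA : A.IsHermitian) :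
    RCLike.re (A * A).trace = ∑ i, hA.eigenvalues i ^ 2 := by
  have hA' : IsSelfAdjoint A := hA
  rw [← sq, ← cfc_pow_id (R := ℝ) A 2, hA.trace_cfc, ← RCLike.ofReal_sum, RCLike.ofReal_re]

end Matrix.IsHermitian

lemma luePsi_eq_prod {N M : ℕ} {H : Matrix (Fin N) (Fin N) ℂ} (hH : H.IsHermitian)
    (hNM : N ≤ M) (hM : 0 < M) (hpos : ∀ i, 0 ≤ (M : ℝ) + √M * hH.eigenvalues i) :
    luePsi N M H = (π ^ (N * (N - 1) / 2))⁻¹ *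
      (∏ j ∈ range N, (M : ℝ) ^ (M - (j + 1)) * √M * exp (-M) / (M - (j + 1))!) *
      ∏ i, (1 + hH.eigenvalues i / √M) ^ (M - N) * exp (-(√M * hH.eigenvalues i)) := by
  have hS : (M : ℂ) • (1 : Matrix (Fin N) (Fin N) ℂ) + (√M : ℂ) • H =
      cfc (fun x => (M : ℝ) + √M * x) H := by
    simpa using hH.ofReal_smul_one_add_ofReal_smul_eq_cfc M √M
  have hs : √(M : ℝ) ≠ 0 := (sqrt_pos.mpr (Nat.cast_pos.mpr hM)).ne'
  have hfactor : ∀ i, (M : ℝ) + √M * hH.eigenvalues i = M * (1 + hH.eigenvalues i / √M) := by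
    intro i
    field_simp
    linear_combination hH.eigenvalues i * mul_self_sqrt (Nat.cast_nonneg (M : ℕ))
  have hexp : ∀ i, exp (-((M : ℝ) + √M * hH.eigenvalues i)) =
      exp (-M) * exp (-(√M * hH.eigenvalues i)) := by
    intro i
    rw [← exp_add, neg_add]
  rw [luePsi, luePhi, hS, if_pos (hH.posSemidef_cfc hpos), hH.det_cfc, hH.trace_cfc,
    ← RCLike.ofReal_prod, ← RCLike.ofReal_sum, ← RCLike.re_to_complex, ← RCLike.re_to_complex,
    RCLike.ofReal_re, RCLike.ofReal_re,
    ← sum_neg_distrib, exp_sum, prod_congr rfl fun i _ => hfactor i,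
    prod_congr rfl fun i _ => hexp i, prod_mul_distrib, prod_mul_distrib, prod_mul_distrib,
    prod_const, prod_const, card_univ, Fintype.card_fin, mul_pow, ← prod_pow,
    prod_div_distrib, prod_mul_distrib, prod_mul_distrib, prod_const, prod_const, card_range,
    ← natCast_rpow_sq_div_two_mul_pow_eq_prod hNM]
  ring

lemma luePsi_eventuallyEq_prod {N : ℕ} {H : Matrix (Fin N) (Fin N) ℂ} (hH : H.IsHermitian) :
    (fun M => luePsi N M H) =ᶠ[atTop] fun M : ℕ => (π ^ (N * (N - 1) / 2))⁻¹ *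
      (∏ j ∈ range N, (M : ℝ) ^ (M - (j + 1)) * √M * exp (-M) / (M - (j + 1))!) *
      ∏ i, (1 + hH.eigenvalues i / √M) ^ (M - N) * exp (-(√M * hH.eigenvalues i)) := by
  filter_upwards [eventually_ge_atTop N, eventually_gt_atTop 0,
    eventually_all.mpr fun i => tendsto_sqrt_natCast_atTop.eventually_ge_atTop |hH.eigenvalues i|]
    with M hNM hM hbound
  refine luePsi_eq_prod hH hNM hM fun i => ?_
  have hsum : 0 ≤ √(M : ℝ) + hH.eigenvalues i := by
    linarith [neg_abs_le (hH.eigenvalues i), hbound i]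
  calc (0 : ℝ) ≤ √M * (√M + hH.eigenvalues i) := mul_nonneg (sqrt_nonneg _) hsum
    _ = M + √M * hH.eigenvalues i := by rw [mul_add, mul_self_sqrt (Nat.cast_nonneg _)]

theorem luePsi_tendsto_gue_density_general (N : ℕ)
    (H : Matrix (Fin N) (Fin N) ℂ) (hH : H.IsHermitian) :
    Tendsto (fun M : ℕ => luePsi N M H) atTop
      (𝓝 ((2 : ℝ) ^ (-(N : ℝ) / 2) * Real.pi ^ (-(N : ℝ) ^ 2 / 2) *
        Real.exp (-(H * H).trace.re / 2))) := by
  have hlim := ((tendsto_finsetProd (range N) fun j _ =>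
      tendsto_pow_sub_mul_sqrt_mul_exp_neg_div_factorial (j + 1)).const_mul
        (π ^ (N * (N - 1) / 2))⁻¹).mul
    (tendsto_finsetProd univ fun i _ =>
      tendsto_one_add_div_sqrt_pow_sub_mul_exp N (hH.eigenvalues i))
  have htrace : (H * H).trace.re = ∑ i, hH.eigenvalues i ^ 2 := hH.re_trace_mul_self
  rw [prod_const, card_range, inv_pi_pow_mul_inv_sqrt_two_pi_pow, ← exp_sum, ← sum_div,
    sum_neg_distrib, ← htrace] at hlim
  exact hlim.congr' (luePsi_eventuallyEq_prod hH).symm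

/-- **Pointwise convergence of densities.** For every Hermitian `H`, the rescaled `LUE(N,M)`
density `ψ_M(H)` converges, as `M → ∞`, to the `GUE(N)` density
`ψ(H) = 2^{-N/2} π^{-N²/2} exp(-Tr(H²)/2)`. -/
theorem luePsi_tendsto_gue_density (N : ℕ) (hN : 1 ≤ N)
    (H : Matrix (Fin N) (Fin N) ℂ) (hH : H.IsHermitian) :
    Tendsto (fun M : ℕ => luePsi N M H) atTop
      (𝓝 ((2 : ℝ) ^ (-(N : ℝ) / 2) * Real.pi ^ (-(N : ℝ) ^ 2 / 2) *
        Real.exp (-(H * H).trace.re / 2))) :=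
  luePsi_tendsto_gue_density_general N H hH

end
end

section
/- For fixed N ≥ 1, the constants c_M = exp(−MN) · M^{N²/2} · M^{N(M−N)} / (π^{N(N−1)/2} ∏_{j=1}^N (M−j)!) converge, as M → ∞, to 2^{−N/2} π^{−N²/2}. -/
/-!
By Stirling, `(M - k)! ~ √(2π) (M - k)^(M - k + 1/2) e^(k - M)`, and since
`(1 - k/M)^(M - k + 1/2) → e^(-k)` the shift by `k` can be moved out of the base:
`(M - k)! ~ √(2π) e^(-M) M^(M - k + 1/2)`. Multiplying over `k = 1, …, N`, the exponents of `M`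
add up to `NM - N²/2`, which is exactly the power of `M` in the numerator of `c_M`, so `c_M` is
asymptotic to the constant `(π^(N(N-1)/2) √(2π)^N)⁻¹ = 2^(-N/2) π^(-N²/2)`.
-/

open Filter Topology Asymptotics Real
open scoped Nat

lemma tendsto_one_add_div_rpow_add_exp (t c : ℝ) :
    Tendsto (fun x : ℝ => (1 + t / x) ^ (x + c)) atTop (𝓝 (exp t)) := by
  have hbase : Tendsto (fun x : ℝ => 1 + t / x) atTop (𝓝 1) := by
    simpa using (tendsto_const_nhds (x := t)).div_atTop tendsto_id |>.const_add 1
  have hc : Tendsto (fun x : ℝ => (1 + t / x) ^ c) atTop (𝓝 1) := by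
    simpa using hbase.rpow_const (Or.inl one_ne_zero)
  have hprod := (tendsto_one_add_div_rpow_exp t).mul hc
  rw [mul_one] at hprod
  refine hprod.congr' ?_
  filter_upwards [hbase.eventually (lt_mem_nhds one_pos)] with x hx
  exact (rpow_add hx _ _).symm

lemma factorial_isEquivalent_stirling_rpow :
    (fun n : ℕ => (n ! : ℝ)) ~[atTop]
      fun n => √(2 * π) * exp (-n) * (n : ℝ) ^ ((n : ℝ) + 1 / 2) := by
  refine Stirling.factorial_isEquivalent_stirling.congr_right (Eventually.of_forall fun n => ?_)
  dsimp only
  rw [rpow_add' n.cast_nonneg (by positivity), rpow_natCast, ← sqrt_eq_rpow, div_pow, exp_one_pow,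
    exp_neg, mul_right_comm 2, sqrt_mul (by positivity)]
  field_simp

lemma factorial_sub_isEquivalent (k : ℕ) :
    (fun M : ℕ => ((M - k)! : ℝ)) ~[atTop]
      fun M => √(2 * π) * exp (-M) * (M : ℝ) ^ ((M : ℝ) - k + 1 / 2) := by
  refine (factorial_isEquivalent_stirling_rpow.comp_tendsto (tendsto_sub_atTop_nat k)).trans
    (isEquivalent_of_tendsto_one ?_)
  have hlim : Tendsto (fun M : ℕ => exp k * (1 + (-k : ℝ) / M) ^ ((M : ℝ) + (1 / 2 - k)))
      atTop (𝓝 1) := by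
    simpa [← exp_add] using ((tendsto_one_add_div_rpow_add_exp (-k) (1 / 2 - k)).comp
      tendsto_natCast_atTop_atTop).const_mul (exp k)
  refine hlim.congr' ?_
  filter_upwards [eventually_gt_atTop k] with M hM
  have hMk : (k : ℝ) < M := by exact_mod_cast hM
  have hM0 : (0 : ℝ) < M := by linarith [k.cast_nonneg (α := ℝ)]
  have hbase : 1 + (-k : ℝ) / M = (M - k) / M := by field_simp; ring
  simp only [Function.comp_apply, Pi.div_apply, Nat.cast_sub hM.le, hbase]
  rw [div_rpow (by linarith) hM0.le, show (M : ℝ) + (1 / 2 - k) = M - k + 1 / 2 by ring, exp_neg,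
    exp_neg, exp_sub]
  field_simp

lemma prod_stirling_sub_eq (N : ℕ) {x : ℝ} (hx : 0 < x) :
    ∏ j ∈ Finset.range N, √(2 * π) * exp (-x) * x ^ (x - ((j + 1 : ℕ) : ℝ) + 1 / 2) =
      √(2 * π) ^ N * exp (-(x * N)) * x ^ (N * x - (N : ℝ) ^ 2 / 2) := by
  have hsum : ∑ j ∈ Finset.range N, (x - ((j + 1 : ℕ) : ℝ) + 1 / 2) =
      N * x - (N : ℝ) ^ 2 / 2 := by
    induction N with
    | zero => simp
    | succ n ih => rw [Finset.sum_range_succ, ih]; push_cast; ring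
  rw [Finset.prod_mul_distrib, Finset.prod_mul_distrib, Finset.prod_const, Finset.prod_const,
    Finset.card_range, ← rpow_sum_of_pos hx, hsum, ← exp_nat_mul, mul_neg, mul_comm (N : ℝ)]

lemma prod_factorial_sub_isEquivalent (N : ℕ) :
    (fun M : ℕ => ∏ j ∈ Finset.range N, ((M - (j + 1))! : ℝ)) ~[atTop]
      fun M => √(2 * π) ^ N * exp (-(M * N)) * (M : ℝ) ^ (N * (M : ℝ) - (N : ℝ) ^ 2 / 2) := by
  refine (IsEquivalent.finsetProd fun j _ => factorial_sub_isEquivalent (j + 1)).congr_right ?_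
  filter_upwards [eventually_gt_atTop 0] with M hM
  exact prod_stirling_sub_eq N (Nat.cast_pos.2 hM)

lemma two_rpow_mul_pi_rpow_eq_inv (N : ℕ) :
    (2 : ℝ) ^ (-(N : ℝ) / 2) * π ^ (-(N : ℝ) ^ 2 / 2) =
      (π ^ (N * (N - 1) / 2) * √(2 * π) ^ N)⁻¹ := by
  rw [← Nat.choose_two_right, ← rpow_natCast π, Nat.cast_choose_two, sqrt_eq_rpow,
    ← rpow_mul_natCast (by positivity), mul_rpow zero_le_two pi_pos.le, ← mul_assoc,
    mul_right_comm, ← rpow_add pi_pos, mul_inv, mul_comm, ← rpow_neg zero_le_two,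
    ← rpow_neg pi_pos.le]
  congr 2 <;> ring

theorem cM_tendsto_general (N : ℕ) :
    Tendsto
      (fun M : ℕ =>
        Real.exp (-(M * N : ℝ)) * (M : ℝ) ^ ((N : ℝ) ^ 2 / 2) * (M : ℝ) ^ (N * (M - N)) /
          (Real.pi ^ (N * (N - 1) / 2) * ∏ j ∈ Finset.range N, ((M - (j + 1)).factorial : ℝ)))
      atTop
      (𝓝 ((2 : ℝ) ^ (-(N : ℝ) / 2) * Real.pi ^ (-(N : ℝ) ^ 2 / 2))) := by
  apply (IsEquivalent.refl.div
    (IsEquivalent.refl.mul (prod_factorial_sub_isEquivalent N))).tendsto_nhds_iff.2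
  refine tendsto_const_nhds.congr' ?_
  filter_upwards [eventually_ge_atTop N, eventually_gt_atTop 0] with M hNM hMpos
  have hM : (0 : ℝ) < M := by exact_mod_cast hMpos
  have hpow : (M : ℝ) ^ ((N : ℝ) ^ 2 / 2) * (M : ℝ) ^ (N * (M - N)) =
      (M : ℝ) ^ (N * (M : ℝ) - (N : ℝ) ^ 2 / 2) := by
    rw [← rpow_natCast (M : ℝ) (N * (M - N)), ← rpow_add hM]
    push_cast [Nat.cast_sub hNM]
    ring_nf
  simp only [Pi.div_apply, Pi.mul_apply]
  rw [two_rpow_mul_pi_rpow_eq_inv, mul_assoc _ (_ ^ ((N : ℝ) ^ 2 / 2)), hpow]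
  field_simp

/-- **Convergence of the normalizing constants.** For fixed `N ≥ 1`, the constants
`c_M = exp(-MN) · M^{N²/2} · M^{N(M-N)} / (π^{N(N-1)/2} ∏_{j=1}^N (M-j)!)` converge to
`2^{-N/2} π^{-N²/2}` as `M → ∞`. -/
theorem cM_tendsto (N : ℕ) (hN : 1 ≤ N) :
    Tendsto
      (fun M : ℕ =>
        Real.exp (-(M * N : ℝ)) * (M : ℝ) ^ ((N : ℝ) ^ 2 / 2) * (M : ℝ) ^ (N * (M - N)) /
          (Real.pi ^ (N * (N - 1) / 2) * ∏ j ∈ Finset.range N, ((M - (j + 1)).factorial : ℝ)))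
      atTop
      (𝓝 ((2 : ℝ) ^ (-(N : ℝ) / 2) * Real.pi ^ (-(N : ℝ) ^ 2 / 2))) :=
  cM_tendsto_general N
end
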